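/- Let L > 0 and let p, h : [0, L] → ℝ³ be twice continuously differentiable with p′(t) ≠ 0 for all t ∈ [0, L]. Then the function g(s) := (1/L) ∫₀^L ‖(p′(t)+s h′(t)) × (p″(t)+s h″(t))‖² / ‖p′(t)+s h′(t)‖⁵ dt is differentiable at s = 0 with g′(0) = (1/L) ∫₀^L ( 2 (p″·h″)/‖p′‖³ − 3 ‖p″‖² (p′·h′)/‖p′‖⁵ − 2 (p′·h″ + p″·h′)(p′·p″)/‖p′‖⁵ + 5 (p′·h′)(p′·p″)²/‖p′‖⁷ ) dt (integrand evaluated at t). -/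

import Mathlib

/-! By Lagrange's identity `‖a × b‖² = ‖a‖²‖b‖² - ⟪a, b⟫²`, the integrand is a rational function of
inner products and of `‖a‖`, hence differentiable in `(a, b)` wherever `a ≠ 0`. For small `ε` the
perturbed velocity `p′ + s • h′` stays away from `0` on the compact set `[-ε, ε] × [0, L]`, so the
integrand and its `s`-derivative are jointly continuous, hence bounded there, and dominated
convergence allows differentiation under the integral sign. -/

open BigOperators Finset intervalIntegral
open scoped Matrix RealInnerProductSpace

noncomputable def cross3 (x y : EuclideanSpace ℝ (Fin 3)) : EuclideanSpace ℝ (Fin 3) :=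
  (WithLp.equiv 2 (Fin 3 → ℝ)).symm
    (crossProduct ((WithLp.equiv 2 (Fin 3 → ℝ)) x) ((WithLp.equiv 2 (Fin 3 → ℝ)) y))

open Set Metric Function

local notation "ℝ³" => EuclideanSpace ℝ (Fin 3)

theorem HasDerivAt.norm {F : Type*} [NormedAddCommGroup F] [InnerProductSpace ℝ F]
    {f : ℝ → F} {f' : F} {x : ℝ} (hf : HasDerivAt f f' x) (h0 : f x ≠ 0) :
    HasDerivAt (‖f ·‖) (⟪f x, f'⟫ / ‖f x‖) x := by
  have h := hf.norm_sq.sqrt (by positivity)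
  simp only [Real.sqrt_sq (norm_nonneg _)] at h
  convert h using 1
  field_simp

theorem hasDerivAt_add_smul {E : Type*} [NormedAddCommGroup E] [NormedSpace ℝ E]
    (w dw : E) (s : ℝ) : HasDerivAt (fun s : ℝ => w + s • dw) dw s := by
  simpa using ((hasDerivAt_id s).smul_const dw).const_add w

theorem IsCompact.exists_pos_forall_add_smul_ne_zero {X E : Type*} [TopologicalSpace X]
    [NormedAddCommGroup E] [NormedSpace ℝ E] {K : Set X} (hK : IsCompact K) {f g : X → E}
    (hf : ContinuousOn f K) (hg : ContinuousOn g K) (hf0 : ∀ t ∈ K, f t ≠ 0) :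
    ∃ ε > 0, ∀ s ∈ closedBall (0 : ℝ) ε, ∀ t ∈ K, f t + s • g t ≠ 0 := by
  obtain ⟨δ, hδ, hfδ⟩ := hK.exists_forall_le' hf.norm fun t ht => norm_pos_iff.2 (hf0 t ht)
  obtain ⟨C, hC, hgC⟩ := (hK.image_of_continuousOn hg).isBounded.exists_pos_norm_le
  refine ⟨δ / (2 * C), by positivity, fun s hs t ht => norm_pos_iff.1 ?_⟩
  have hsC : |s| * C ≤ δ / 2 := by
    rw [mem_closedBall, dist_zero_right, Real.norm_eq_abs] at hs
    calc |s| * C ≤ δ / (2 * C) * C := by gcongr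
      _ = δ / 2 := by field_simp
  calc 0 < δ - |s| * C := by linarith
    _ ≤ ‖f t‖ - ‖s • g t‖ := by
        rw [norm_smul, Real.norm_eq_abs]
        gcongr
        exacts [hfδ t ht, hgC _ (mem_image_of_mem g ht)]
    _ ≤ ‖f t + s • g t‖ := by simpa using norm_sub_norm_le (f t) (-(s • g t))

theorem hasDerivAt_intervalIntegral_of_continuousOn {E : Type*} [NormedAddCommGroup E]
    [NormedSpace ℝ E] {F F' : ℝ → ℝ → E} {x₀ ε a b : ℝ} (hε : 0 < ε)
    (hF : ContinuousOn (uncurry F) (closedBall x₀ ε ×ˢ uIcc a b))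
    (hF' : ContinuousOn (uncurry F') (closedBall x₀ ε ×ˢ uIcc a b))
    (hdiff : ∀ t ∈ uIcc a b, ∀ x ∈ ball x₀ ε, HasDerivAt (F · t) (F' x t) x) :
    HasDerivAt (fun x => ∫ t in a..b, F x t) (∫ t in a..b, F' x₀ t) x₀ := by
  have hslice {G : ℝ → ℝ → E} (hG : ContinuousOn (uncurry G) (closedBall x₀ ε ×ˢ uIcc a b))
      {x : ℝ} (hx : x ∈ closedBall x₀ ε) : ContinuousOn (G x) (uIcc a b) :=
    hG.comp (Continuous.prodMk_right x).continuousOn fun t ht => ⟨hx, ht⟩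
  have hx₀ : x₀ ∈ closedBall x₀ ε := mem_closedBall_self hε.le
  obtain ⟨C, hC⟩ :=
    ((isCompact_closedBall x₀ ε).prod isCompact_uIcc).exists_bound_of_continuousOn hF'
  refine (hasDerivAt_integral_of_dominated_loc_of_deriv_le (bound := fun _ => C)
    (ball_mem_nhds x₀ hε) ?_ ((hslice hF hx₀).intervalIntegrable)
    (((hslice hF' hx₀).mono uIoc_subset_uIcc).aestronglyMeasurable measurableSet_uIoc)
    (.of_forall fun t ht x hx => hC (x, t) ⟨ball_subset_closedBall hx, uIoc_subset_uIcc ht⟩)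
    intervalIntegrable_const
    (.of_forall fun t ht x hx => hdiff t (uIoc_subset_uIcc ht) x hx)).2
  filter_upwards [closedBall_mem_nhds x₀ hε] with x hx
  exact ((hslice hF hx).mono uIoc_subset_uIcc).aestronglyMeasurable measurableSet_uIoc

theorem norm_cross3_sq (a b : ℝ³) : ‖cross3 a b‖ ^ 2 = ‖a‖ ^ 2 * ‖b‖ ^ 2 - ⟪a, b⟫ ^ 2 := by
  simp only [← real_inner_self_eq_norm_sq, EuclideanSpace.inner_eq_star_dotProduct, star_trivial,
    cross3, WithLp.equiv_apply, WithLp.equiv_symm_apply, cross_dot_cross,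
    dotProduct_comm b.ofLp a.ofLp]
  ring

-- `κ² ‖γ′‖` for a curve `γ` with `γ′ = a` and `γ″ = b`.
noncomputable def bendingDensity (a b : ℝ³) : ℝ := ‖cross3 a b‖ ^ 2 / ‖a‖ ^ 5

noncomputable def bendingDensityDeriv (a b da db : ℝ³) : ℝ :=
  2 * ⟪b, db⟫ / ‖a‖ ^ 3 - 3 * ‖b‖ ^ 2 * ⟪a, da⟫ / ‖a‖ ^ 5
    - 2 * (⟪a, db⟫ + ⟪b, da⟫) * ⟪a, b⟫ / ‖a‖ ^ 5 + 5 * ⟪a, da⟫ * ⟪a, b⟫ ^ 2 / ‖a‖ ^ 7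

theorem bendingDensity_eq (a b : ℝ³) :
    bendingDensity a b = (‖a‖ ^ 2 * ‖b‖ ^ 2 - ⟪a, b⟫ ^ 2) / ‖a‖ ^ 5 := by
  rw [bendingDensity, norm_cross3_sq]

theorem HasDerivAt.bendingDensity {A B : ℝ → ℝ³} {dA dB : ℝ³} {s : ℝ}
    (hA : HasDerivAt A dA s) (hB : HasDerivAt B dB s) (h0 : A s ≠ 0) :
    HasDerivAt (fun x => bendingDensity (A x) (B x))
      (bendingDensityDeriv (A s) (B s) dA dB) s := by
  simp only [bendingDensity_eq]
  have hA0 : ‖A s‖ ≠ 0 := norm_ne_zero_iff.2 h0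
  refine (((hA.norm_sq.fun_mul hB.norm_sq).fun_sub ((hA.inner ℝ hB).fun_pow 2)).fun_div
    ((hA.norm h0).fun_pow 5) (pow_ne_zero 5 hA0)).congr_deriv ?_
  rw [_root_.bendingDensityDeriv, real_inner_comm dA (B s)]
  field_simp
  ring

section Continuity

variable {X : Type*} [TopologicalSpace X] {U : Set X} {a b da db : X → ℝ³}

theorem ContinuousOn.bendingDensity (ha : ContinuousOn a U) (hb : ContinuousOn b U)
    (h0 : ∀ x ∈ U, a x ≠ 0) : ContinuousOn (fun x => bendingDensity (a x) (b x)) U := by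
  simp only [bendingDensity_eq]
  have hpow (n : ℕ) : ∀ x ∈ U, ‖a x‖ ^ n ≠ 0 := fun x hx =>
    pow_ne_zero n (norm_ne_zero_iff.2 (h0 x hx))
  fun_prop (disch := exact hpow _)

theorem ContinuousOn.bendingDensityDeriv (ha : ContinuousOn a U) (hb : ContinuousOn b U)
    (hda : ContinuousOn da U) (hdb : ContinuousOn db U) (h0 : ∀ x ∈ U, a x ≠ 0) :
    ContinuousOn (fun x => bendingDensityDeriv (a x) (b x) (da x) (db x)) U := by
  unfold _root_.bendingDensityDeriv
  have hpow (n : ℕ) : ∀ x ∈ U, ‖a x‖ ^ n ≠ 0 := fun x hx =>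
    pow_ne_zero n (norm_ne_zero_iff.2 (h0 x hx))
  fun_prop (disch := exact hpow _)

end Continuity

theorem hasDerivAt_integral_bendingDensity_add_smul {u v du dv : ℝ → ℝ³} {a b : ℝ}
    (hu : ContinuousOn u (uIcc a b)) (hv : ContinuousOn v (uIcc a b))
    (hdu : ContinuousOn du (uIcc a b)) (hdv : ContinuousOn dv (uIcc a b))
    (hu0 : ∀ t ∈ uIcc a b, u t ≠ 0) :
    HasDerivAt (fun s : ℝ => ∫ t in a..b, bendingDensity (u t + s • du t) (v t + s • dv t))
      (∫ t in a..b, bendingDensityDeriv (u t) (v t) (du t) (dv t)) 0 := by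
  obtain ⟨ε, hε, hne⟩ := isCompact_uIcc.exists_pos_forall_add_smul_ne_zero hu hdu hu0
  set U := closedBall (0 : ℝ) ε ×ˢ uIcc a b
  have hsnd {w : ℝ → ℝ³} (hw : ContinuousOn w (uIcc a b)) :
      ContinuousOn (fun z : ℝ × ℝ => w z.2) U :=
    hw.comp continuous_snd.continuousOn fun _ hz => hz.2
  have hline {w dw : ℝ → ℝ³} (hw : ContinuousOn w (uIcc a b))
      (hdw : ContinuousOn dw (uIcc a b)) :
      ContinuousOn (fun z : ℝ × ℝ => w z.2 + z.1 • dw z.2) U :=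
    (hsnd hw).add (continuous_fst.continuousOn.fun_smul (hsnd hdw))
  have hU0 : ∀ z ∈ U, u z.2 + z.1 • du z.2 ≠ 0 := fun z hz => hne z.1 hz.1 z.2 hz.2
  have hderiv : ∀ t ∈ uIcc a b, ∀ s ∈ ball (0 : ℝ) ε,
      HasDerivAt (fun s => bendingDensity (u t + s • du t) (v t + s • dv t))
        (bendingDensityDeriv (u t + s • du t) (v t + s • dv t) (du t) (dv t)) s :=
    fun t ht s hs => (hasDerivAt_add_smul (u t) (du t) s).bendingDensity
      (hasDerivAt_add_smul (v t) (dv t) s) (hne s (ball_subset_closedBall hs) t ht)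
  simpa only [zero_smul, add_zero] using hasDerivAt_intervalIntegral_of_continuousOn
    (F := fun s t => bendingDensity (u t + s • du t) (v t + s • dv t))
    (F' := fun s t => bendingDensityDeriv (u t + s • du t) (v t + s • dv t) (du t) (dv t)) hε
    ((hline hu hdu).bendingDensity (hline hv hdv) hU0)
    ((hline hu hdu).bendingDensityDeriv (hline hv hdv) (hsnd hdu) (hsnd hdv) hU0) hderiv

theorem penalty_curvature_derivative_general
    (L : ℝ) (hL : 0 < L)
    (p' h' p'' h'' : ℝ → EuclideanSpace ℝ (Fin 3))
    (hp' : ∀ t ∈ Set.Icc (0 : ℝ) L, HasDerivAt p' (p'' t) t)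
    (hp''c : ContinuousOn p'' (Set.Icc (0 : ℝ) L))
    (hp'0 : ∀ t ∈ Set.Icc (0 : ℝ) L, p' t ≠ 0)
    (hh' : ∀ t ∈ Set.Icc (0 : ℝ) L, HasDerivAt h' (h'' t) t)
    (hh''c : ContinuousOn h'' (Set.Icc (0 : ℝ) L))
    (g : ℝ → ℝ)
    (hg : g = fun s => L⁻¹ * ∫ t in (0 : ℝ)..L,
      ‖cross3 (p' t + s • h' t) (p'' t + s • h'' t)‖ ^ 2 / ‖p' t + s • h' t‖ ^ 5) :
    HasDerivAt g
      (L⁻¹ * ∫ t in (0 : ℝ)..L,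
        (2 * ⟪p'' t, h'' t⟫ / ‖p' t‖ ^ 3
          - 3 * ‖p'' t‖ ^ 2 * ⟪p' t, h' t⟫ / ‖p' t‖ ^ 5
          - 2 * (⟪p' t, h'' t⟫ + ⟪p'' t, h' t⟫) * ⟪p' t, p'' t⟫ / ‖p' t‖ ^ 5
          + 5 * ⟪p' t, h' t⟫ * ⟪p' t, p'' t⟫ ^ 2 / ‖p' t‖ ^ 7))
      0 := by
  rw [← uIcc_of_le hL.le] at hp' hp''c hp'0 hh' hh''c
  have hp'c : ContinuousOn p' (uIcc 0 L) := fun t ht => (hp' t ht).continuousAt.continuousWithinAt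
  have hh'c : ContinuousOn h' (uIcc 0 L) := fun t ht => (hh' t ht).continuousAt.continuousWithinAt
  subst hg
  exact (hasDerivAt_integral_bendingDensity_add_smul hp'c hp''c hh'c hh''c hp'0).const_mul L⁻¹

/-- Lemma 4.4, bending penalty term: directional derivative at `s = 0` of
`Ψ₂(p + sh) = (1/L)∫₀ᴸ |(p′+sh′) × (p″+sh″)|²/|p′+sh′|⁵ dt`. -/
theorem penalty_curvature_derivative
    (L : ℝ) (hL : 0 < L)
    (p h : ℝ → EuclideanSpace ℝ (Fin 3))
    (p' h' p'' h'' : ℝ → EuclideanSpace ℝ (Fin 3))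
    (hp : ∀ t ∈ Set.Icc (0 : ℝ) L, HasDerivAt p (p' t) t)
    (hp' : ∀ t ∈ Set.Icc (0 : ℝ) L, HasDerivAt p' (p'' t) t)
    (hp''c : ContinuousOn p'' (Set.Icc (0 : ℝ) L))
    (hp'0 : ∀ t ∈ Set.Icc (0 : ℝ) L, p' t ≠ 0)
    (hh : ∀ t ∈ Set.Icc (0 : ℝ) L, HasDerivAt h (h' t) t)
    (hh' : ∀ t ∈ Set.Icc (0 : ℝ) L, HasDerivAt h' (h'' t) t)
    (hh''c : ContinuousOn h'' (Set.Icc (0 : ℝ) L))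
    (g : ℝ → ℝ)
    (hg : g = fun s => L⁻¹ * ∫ t in (0 : ℝ)..L,
      ‖cross3 (p' t + s • h' t) (p'' t + s • h'' t)‖ ^ 2 / ‖p' t + s • h' t‖ ^ 5) :
    HasDerivAt g
      (L⁻¹ * ∫ t in (0 : ℝ)..L,
        (2 * ⟪p'' t, h'' t⟫ / ‖p' t‖ ^ 3
          - 3 * ‖p'' t‖ ^ 2 * ⟪p' t, h' t⟫ / ‖p' t‖ ^ 5
          - 2 * (⟪p' t, h'' t⟫ + ⟪p'' t, h' t⟫) * ⟪p' t, p'' t⟫ / ‖p' t‖ ^ 5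
          + 5 * ⟪p' t, h' t⟫ * ⟪p' t, p'' t⟫ ^ 2 / ‖p' t‖ ^ 7))
      0 :=
  penalty_curvature_derivative_general L hL p' h' p'' h'' hp' hp''c hp'0 hh' hh''c g hg
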